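/- Correctness of the SaSTL quantitative semantics: for every SaSTL formula φ, any two spatial-temporal signals ω and ω' over the same time and spatial domains, every sample time t in 𝕋 and every location l in L, if (ω,t,l) ⊨ φ and ‖ω − ω'‖_∞ < ρ(φ,ω,t,l), then (ω',t,l) ⊨ φ. -/

import Mathlib

open scoped Classical

noncomputable section

/-- Aggregation operations of SaSTL. -/
inductive AggOp : Type
  | max | min | sum | avg

/-- SaSTL formulas over a set of signal variables `Var` and a set of
spatial-domain indices `Dom`.  `untl I φ ψ` is the bounded until `φ U_I ψ`,
`agg op D x c` is the spatial aggregation atom `A_D^op x > c`, and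
`cnt op D φ c` is the spatial counting formula `C_D^op φ > c`. -/
inductive SaSTL (Var Dom : Type) : Type
  | atom : Var → ℝ → SaSTL Var Dom
  | not  : SaSTL Var Dom → SaSTL Var Dom
  | and  : SaSTL Var Dom → SaSTL Var Dom → SaSTL Var Dom
  | untl : Set ℝ → SaSTL Var Dom → SaSTL Var Dom → SaSTL Var Dom
  | agg  : AggOp → Dom → Var → ℝ → SaSTL Var Dom
  | cnt  : AggOp → Dom → SaSTL Var Dom → ℝ → SaSTL Var Dom

/-- A monitoring frame: a finite nonempty set `T` of real sample times, and,
for every spatial-domain index `D` and location `l`, a finite nonempty set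
`nbr D l` of neighbouring locations (the set `L_D^l`). -/
structure Frame (Dom Loc : Type) where
  T : Finset ℝ
  T_ne : T.Nonempty
  nbr : Dom → Loc → Finset Loc
  nbr_ne : ∀ D l, (nbr D l).Nonempty

/-- The `k`-th largest element of a finite multiset of reals: the element at
position `k` when the entries are listed in non-increasing order. -/
def kthLargest (m : Multiset ℝ) (k : ℕ) : ℝ :=
  (Multiset.sort m (· ≤ ·)).getD (Multiset.card m - k) 0

variable {Var Dom Loc : Type}

/-- Boolean satisfaction `(ω, t, l) ⊨ φ`. -/
def sat (F : Frame Dom Loc) (ω : Var → ℝ → Loc → ℝ) :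
    SaSTL Var Dom → ℝ → Loc → Prop
  | .atom x c, t, l => c < ω x t l
  | .not φ, t, l => ¬ sat F ω φ t l
  | .and φ ψ, t, l => sat F ω φ t l ∧ sat F ω ψ t l
  | .untl I φ ψ, t, l =>
      ∃ t' ∈ F.T, t' - t ∈ I ∧ sat F ω ψ t' l ∧
        ∀ t'' ∈ F.T, t < t'' → t'' < t' → sat F ω φ t'' l
  | .agg op D x c, t, l =>
      (match op with
        | .max => (F.nbr D l).sup' (F.nbr_ne D l) (fun l' => ω x t l')
        | .min => (F.nbr D l).inf' (F.nbr_ne D l) (fun l' => ω x t l')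
        | .sum => ∑ l' ∈ F.nbr D l, ω x t l'
        | .avg => (∑ l' ∈ F.nbr D l, ω x t l') / (F.nbr D l).card) > c
  | .cnt op D φ c, t, l =>
      (match op with
        | .max => (F.nbr D l).sup' (F.nbr_ne D l)
            (fun l' => if sat F ω φ t l' then (1 : ℝ) else 0)
        | .min => (F.nbr D l).inf' (F.nbr_ne D l)
            (fun l' => if sat F ω φ t l' then (1 : ℝ) else 0)
        | .sum => ∑ l' ∈ F.nbr D l, (if sat F ω φ t l' then (1 : ℝ) else 0)
        | .avg => (∑ l' ∈ F.nbr D l, (if sat F ω φ t l' then (1 : ℝ) else 0)) /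
            (F.nbr D l).card) > c

/-- Quantitative semantics (robustness) `ρ(φ, ω, t, l)`. -/
def rho (F : Frame Dom Loc) (ω : Var → ℝ → Loc → ℝ) :
    SaSTL Var Dom → ℝ → Loc → ℝ
  | .atom x c, t, l => ω x t l - c
  | .not φ, t, l => - rho F ω φ t l
  | .and φ ψ, t, l => min (rho F ω φ t l) (rho F ω ψ t l)
  | .untl I φ ψ, t, l =>
      if h : (F.T.filter (fun s => s - t ∈ I)).Nonempty then
        (F.T.filter (fun s => s - t ∈ I)).sup' h (fun t' =>
          if h' : (F.T.filter (fun s => t < s ∧ s < t')).Nonempty then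
            min (rho F ω ψ t' l)
              ((F.T.filter (fun s => t < s ∧ s < t')).inf' h'
                (fun t'' => rho F ω φ t'' l))
          else rho F ω ψ t' l)
      else 0
  | .agg op D x c, t, l =>
      match op with
      | .max => (F.nbr D l).sup' (F.nbr_ne D l) (fun l' => ω x t l') - c
      | .min => (F.nbr D l).inf' (F.nbr_ne D l) (fun l' => ω x t l') - c
      | .sum => ((∑ l' ∈ F.nbr D l, ω x t l') - c) / (F.nbr D l).card
      | .avg => (∑ l' ∈ F.nbr D l, ω x t l') / (F.nbr D l).card - c
  | .cnt op D φ c, t, l =>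
      match op with
      | .max => (F.nbr D l).sup' (F.nbr_ne D l) (fun l' => rho F ω φ t l')
      | .min => (F.nbr D l).inf' (F.nbr_ne D l) (fun l' => rho F ω φ t l')
      | .sum => kthLargest ((F.nbr D l).val.map (fun l' => rho F ω φ t l'))
          (⌊c⌋ + 1).toNat
      | .avg => kthLargest ((F.nbr D l).val.map (fun l' => rho F ω φ t l'))
          (⌊c * (F.nbr D l).card⌋ + 1).toNat

/-- Well-formedness assumptions on formulas: every until-interval is a bounded
interval of positive reals whose shifted intersection with the sample times is
nonempty, and the constants in counting subformulas satisfy `0 ≤ c < 1` for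
`op ∈ {max, min, avg}` and `0 ≤ c < |L_D^l|` for `op = sum`. -/
def WellFormed (F : Frame Dom Loc) : SaSTL Var Dom → Prop
  | .atom _ _ => True
  | .not φ => WellFormed F φ
  | .and φ ψ => WellFormed F φ ∧ WellFormed F ψ
  | .untl I φ ψ =>
      (I ⊆ Set.Ioi 0 ∧ BddAbove I ∧ I.OrdConnected) ∧
      (∀ t ∈ F.T, (F.T.filter (fun s => s - t ∈ I)).Nonempty) ∧
      WellFormed F φ ∧ WellFormed F ψ
  | .agg _ _ _ _ => True
  | .cnt op D φ c =>
      WellFormed F φ ∧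
      (match op with
        | .sum => 0 ≤ c ∧ ∀ l : Loc, c < (F.nbr D l).card
        | _ => 0 ≤ c ∧ c < 1)

/-- Sup-norm distance `‖ω − ω'‖_∞` between two spatial-temporal signals:
the maximum over all `(x, t, l) ∈ X × 𝕋 × L` of `|ω(x,t,l) − ω'(x,t,l)|`. -/
def supDist [Fintype Var] [Nonempty Var] [Fintype Loc] [Nonempty Loc]
    (F : Frame Dom Loc) (ω ω' : Var → ℝ → Loc → ℝ) : ℝ :=
  (Finset.univ : Finset Var).sup' Finset.univ_nonempty fun x =>
    F.T.sup' F.T_ne fun t =>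
      (Finset.univ : Finset Loc).sup' Finset.univ_nonempty fun l =>
        |ω x t l - ω' x t l|

/-!
Write `d = ‖ω − ω'‖_∞`. Structural induction on `φ` carries the two-sided invariant
"`ρ > d` forces `(ω',t,l) ⊨ φ` and `ρ < -d` forces `(ω',t,l) ⊭ φ`"; its negative half is what
lets the induction pass through `¬`. Atoms and spatial aggregates move by at most `d` under the
perturbation (sums by `|L_D^l| · d`, which the normalisation in `ρ` absorbs). A `max` (`min`) of
margins certifies an existential (universal) statement, which handles until, `C^max` and
`C^min`. For `C^sum`, the `(⌊c⌋ + 1)`-th largest margin `v` certifies that more than `c`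
neighbours satisfy the subformula: at least `⌊c⌋ + 1` margins are `≥ v` and at most `⌊c⌋` are
`> v`; `C^avg` is the same count with `c · |L_D^l|` in place of `c`.
-/

namespace List

variable {α : Type*} [LinearOrder α] {s : List α} {j : ℕ}

lemma Pairwise.getElem_le_getElem (hs : s.Pairwise (· ≤ ·)) {i j : ℕ} (hi : i < s.length)
    (hj : j < s.length) (hij : i ≤ j) : s[i] ≤ s[j] :=
  hs.rel_get_of_le (a := ⟨i, hi⟩) (b := ⟨j, hj⟩) hij

lemma Pairwise.length_sub_le_countP_getElem_le (hs : s.Pairwise (· ≤ ·)) (hj : j < s.length) :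
    s.length - j ≤ s.countP (fun v => s[j] ≤ v) := by
  have hdrop : (s.drop j).countP (fun v => s[j] ≤ v) = s.length - j := by
    rw [countP_eq_length.mpr, length_drop]
    intro v hv
    obtain ⟨i, hi, rfl⟩ := mem_iff_getElem.mp hv
    rw [getElem_drop, decide_eq_true_eq]
    exact hs.getElem_le_getElem hj _ (by omega)
  exact hdrop ▸ (drop_sublist j s).countP_le

lemma Pairwise.countP_getElem_lt_le (hs : s.Pairwise (· ≤ ·)) (hj : j < s.length) :
    s.countP (fun v => s[j] < v) ≤ s.length - (j + 1) := by
  have htake : (s.take (j + 1)).countP (fun v => ¬ s[j] < v) = j + 1 := by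
    rw [countP_eq_length.mpr, length_take]
    · omega
    intro v hv
    obtain ⟨i, hi, rfl⟩ := mem_iff_getElem.mp hv
    rw [getElem_take, decide_eq_true_eq, not_lt]
    simp only [length_take] at hi
    exact hs.getElem_le_getElem _ hj (by omega)
  have := (take_sublist (j + 1) s).countP_le (p := fun v => ¬ s[j] < v)
  have := length_eq_countP_add_countP (fun v => s[j] < v) (l := s)
  simp only [decide_eq_true_eq] at *
  omega

end List

namespace Multiset

variable {m : Multiset ℝ} {k : ℕ}

lemma kthLargest_eq_getElem (hk : 0 < k) (hkm : k ≤ card m) :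
    kthLargest m k = (m.sort (· ≤ ·))[card m - k]'(by rw [length_sort]; omega) :=
  List.getD_eq_getElem _ _ _

lemma le_card_filter_kthLargest_le (hk : 0 < k) (hkm : k ≤ card m) :
    k ≤ card (m.filter (kthLargest m k ≤ ·)) := by
  have h := (pairwise_sort m (· ≤ ·)).length_sub_le_countP_getElem_le
    (j := card m - k) (by rw [length_sort]; omega)
  rw [← kthLargest_eq_getElem hk hkm, length_sort, ← coe_countP, sort_eq,
    countP_eq_card_filter] at h
  exact (Nat.sub_sub_self hkm).symm.trans_le h

lemma card_filter_kthLargest_lt_lt (hk : 0 < k) (hkm : k ≤ card m) :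
    card (m.filter (kthLargest m k < ·)) < k := by
  have h := (pairwise_sort m (· ≤ ·)).countP_getElem_lt_le
    (j := card m - k) (by rw [length_sort]; omega)
  rw [← kthLargest_eq_getElem hk hkm, length_sort, ← coe_countP, sort_eq,
    countP_eq_card_filter] at h
  exact h.trans_lt (by omega)

end Multiset

lemma lt_natCast_iff_toNat_floor_add_one_le (c : ℝ) (n : ℕ) : c < n ↔ (⌊c⌋ + 1).toNat ≤ n := by
  rw [Int.toNat_le, Int.add_one_le_iff, Int.floor_lt, Int.cast_natCast]

lemma lt_ite_one_zero_iff {c : ℝ} (hc₀ : 0 ≤ c) (hc₁ : c < 1) (p : Prop) [Decidable p] :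
    c < (if p then 1 else 0) ↔ p := by
  split_ifs with hp <;> simp [hp, hc₁, hc₀.not_gt]

namespace Finset

variable {ι : Type*} {s : Finset ι} {f g : ι → ℝ} {d : ℝ}

lemma abs_sup'_sub_sup'_le (hs : s.Nonempty) (h : ∀ i ∈ s, |f i - g i| ≤ d) :
    |s.sup' hs f - s.sup' hs g| ≤ d := by
  rw [abs_sub_le_iff, sub_le_iff_le_add, sub_le_iff_le_add]
  constructor <;> refine sup'_le hs _ fun i hi => ?_ <;> have := abs_le.mp (h i hi)
  · linarith [le_sup' g hi]
  · linarith [le_sup' f hi]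

lemma abs_inf'_sub_inf'_le (hs : s.Nonempty) (h : ∀ i ∈ s, |f i - g i| ≤ d) :
    |s.inf' hs f - s.inf' hs g| ≤ d := by
  rw [abs_sub_le_iff, sub_le_comm, sub_le_comm (a := s.inf' hs g)]
  constructor <;> refine (le_inf' hs _ fun i hi => ?_) <;> have := abs_le.mp (h i hi)
  · linarith [inf'_le f hi]
  · linarith [inf'_le g hi]

lemma abs_sum_sub_sum_le (h : ∀ i ∈ s, |f i - g i| ≤ d) :
    |∑ i ∈ s, f i - ∑ i ∈ s, g i| ≤ #s * d := by
  rw [← sum_sub_distrib, ← nsmul_eq_mul]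
  exact (abs_sum_le_sum_abs _ _).trans (sum_le_card_nsmul _ _ _ h)

end Finset

def IsMargin (d r : ℝ) (p : Prop) : Prop :=
  (d < r → p) ∧ (d < -r → ¬p)

section IsMargin

open Finset

variable {d r r' : ℝ} {p q : Prop}

lemma isMargin_zero (hd : 0 ≤ d) : IsMargin d 0 p :=
  ⟨fun h => absurd h hd.not_gt, fun h => absurd h (by simpa using hd.not_gt)⟩

lemma isMargin_sub_of_abs_sub_le {a a' : ℝ} (c : ℝ) (h : |a - a'| ≤ d) :
    IsMargin d (a - c) (c < a') := by
  obtain ⟨h₁, h₂⟩ := abs_le.mp h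
  exact ⟨fun _ => by linarith, fun _ => by linarith⟩

lemma IsMargin.not (h : IsMargin d r p) : IsMargin d (-r) ¬p :=
  ⟨h.2, fun hr => not_not.mpr (h.1 (by rwa [neg_neg] at hr))⟩

lemma IsMargin.and (hp : IsMargin d r p) (hq : IsMargin d r' q) :
    IsMargin d (min r r') (p ∧ q) := by
  refine ⟨fun h => ?_, fun h hpq => ?_⟩
  · rw [lt_min_iff] at h
    exact ⟨hp.1 h.1, hq.1 h.2⟩
  · rw [lt_neg, min_lt_iff] at h
    rcases h with h | h
    · exact hp.2 (lt_neg.mp h) hpq.1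
    · exact hq.2 (lt_neg.mp h) hpq.2

lemma IsMargin.div {n : ℝ} (hn : 0 < n) (h : IsMargin (n * d) r p) : IsMargin d (r / n) p := by
  refine ⟨fun hr => h.1 ?_, fun hr => h.2 ?_⟩
  · rwa [lt_div_iff₀ hn, mul_comm] at hr
  · rwa [← neg_div, lt_div_iff₀ hn, mul_comm] at hr

variable {ι : Type*} {s : Finset ι} {f : ι → ℝ} {P : ι → Prop}

lemma IsMargin.exists (hs : s.Nonempty) (h : ∀ i ∈ s, IsMargin d (f i) (P i)) :
    IsMargin d (s.sup' hs f) (∃ i ∈ s, P i) := by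
  refine ⟨fun hd => ?_, fun hd => ?_⟩
  · obtain ⟨i, hi, hdi⟩ := (lt_sup'_iff hs).mp hd
    exact ⟨i, hi, (h i hi).1 hdi⟩
  · rintro ⟨i, hi, hPi⟩
    exact (h i hi).2 (hd.trans_le (neg_le_neg (s.le_sup' f hi))) hPi

lemma IsMargin.forall (hs : s.Nonempty) (h : ∀ i ∈ s, IsMargin d (f i) (P i)) :
    IsMargin d (s.inf' hs f) (∀ i ∈ s, P i) := by
  refine ⟨fun hd i hi => (h i hi).1 ((lt_inf'_iff hs).mp hd i hi), fun hd hP => ?_⟩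
  obtain ⟨i, hi, hfi⟩ := s.exists_mem_eq_inf' hs f
  exact (h i hi).2 (hfi ▸ hd) (hP i hi)

lemma IsMargin.and_forall (hq : IsMargin d r q) (h : ∀ i ∈ s, IsMargin d (f i) (P i)) :
    IsMargin d (if hs : s.Nonempty then min r (s.inf' hs f) else r) (q ∧ ∀ i ∈ s, P i) := by
  split_ifs with hs
  · exact hq.and (.forall hs h)
  · simpa [not_nonempty_iff_eq_empty.mp hs] using hq

lemma IsMargin.lt_card_filter [DecidablePred P] {c : ℝ} (hc₀ : 0 ≤ c) (hcs : c < #s)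
    (h : ∀ i ∈ s, IsMargin d (f i) (P i)) :
    IsMargin d (kthLargest (s.val.map f) (⌊c⌋ + 1).toNat) (c < #(s.filter P)) := by
  set k := (⌊c⌋ + 1).toNat
  have hk : 0 < k := by have := Int.floor_nonneg.mpr hc₀; omega
  have hks : k ≤ Multiset.card (s.val.map f) := by
    rw [Multiset.card_map, card_val]
    exact (lt_natCast_iff_toNat_floor_add_one_le c _).mp hcs
  have hcard (Q : ℝ → Prop) [DecidablePred Q] :
      Multiset.card ((s.val.map f).filter Q) = #(s.filter (Q ∘ f)) := by
    rw [Multiset.filter_map, Multiset.card_map, ← filter_val, card_val]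
  rw [lt_natCast_iff_toNat_floor_add_one_le]
  set v := kthLargest (s.val.map f) k
  refine ⟨fun hd => ?_, fun hd hck => ?_⟩
  · have hsub : s.filter ((v ≤ ·) ∘ f) ⊆ s.filter P := by
      intro i
      simp only [mem_filter, Function.comp_apply]
      exact fun ⟨hi, hvi⟩ => ⟨hi, (h i hi).1 (hd.trans_le hvi)⟩
    calc k ≤ Multiset.card ((s.val.map f).filter (v ≤ ·)) :=
          Multiset.le_card_filter_kthLargest_le hk hks
      _ = #(s.filter ((v ≤ ·) ∘ f)) := hcard _
      _ ≤ #(s.filter P) := card_le_card hsub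
  · have hsub : s.filter P ⊆ s.filter ((v < ·) ∘ f) := by
      intro i
      simp only [mem_filter, Function.comp_apply]
      refine fun ⟨hi, hPi⟩ => ⟨hi, lt_of_not_ge fun hiv => (h i hi).2 ?_ hPi⟩
      linarith
    have := Multiset.card_filter_kthLargest_lt_lt hk hks
    rw [hcard] at this
    exact absurd (hck.trans (card_le_card hsub)) this.not_ge

end IsMargin

section SupDist

variable [Fintype Var] [Nonempty Var] [Fintype Loc] [Nonempty Loc]

lemma abs_sub_le_supDist (F : Frame Dom Loc) (ω ω' : Var → ℝ → Loc → ℝ) {t : ℝ} (ht : t ∈ F.T)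
    (x : Var) (l : Loc) : |ω x t l - ω' x t l| ≤ supDist F ω ω' :=
  Finset.le_sup'_of_le _ (Finset.mem_univ x) <| Finset.le_sup'_of_le _ ht <|
    Finset.le_sup'_of_le _ (Finset.mem_univ l) le_rfl

lemma supDist_nonneg (F : Frame Dom Loc) (ω ω' : Var → ℝ → Loc → ℝ) : 0 ≤ supDist F ω ω' :=
  (abs_nonneg _).trans
    (abs_sub_le_supDist F ω ω' F.T_ne.choose_spec (Classical.arbitrary _) (Classical.arbitrary _))

open Finset in
theorem isMargin_rho (F : Frame Dom Loc) (ω ω' : Var → ℝ → Loc → ℝ) (φ : SaSTL Var Dom)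
    (hφ : WellFormed F φ) {t : ℝ} (ht : t ∈ F.T) (l : Loc) :
    IsMargin (supDist F ω ω') (rho F ω φ t l) (sat F ω' φ t l) := by
  induction φ generalizing t l with
  | atom x c => exact isMargin_sub_of_abs_sub_le c (abs_sub_le_supDist F ω ω' ht x l)
  | not φ ih => exact (ih hφ ht l).not
  | and φ ψ ihφ ihψ => exact (ihφ hφ.1 ht l).and (ihψ hφ.2 ht l)
  | untl I φ ψ ihφ ihψ =>
    obtain ⟨-, -, hwφ, hwψ⟩ := hφ
    simp only [rho]
    split_ifs with hne
    · convert IsMargin.exists hne fun t' ht' =>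
        IsMargin.and_forall (ihψ hwψ (mem_filter.mp ht').1 l)
          fun t'' ht'' => ihφ hwφ (mem_filter.mp ht'').1 l using 1
      simp only [sat, mem_filter, and_assoc, and_imp]
    · exact isMargin_zero (supDist_nonneg F ω ω')
  | agg op D x c =>
    have hpt : ∀ l' ∈ F.nbr D l, |ω x t l' - ω' x t l'| ≤ supDist F ω ω' :=
      fun l' _ => abs_sub_le_supDist F ω ω' ht x l'
    have hn : (0 : ℝ) < #(F.nbr D l) := by exact_mod_cast (F.nbr_ne D l).card_pos
    cases op
    · exact isMargin_sub_of_abs_sub_le c (abs_sup'_sub_sup'_le _ hpt)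
    · exact isMargin_sub_of_abs_sub_le c (abs_inf'_sub_inf'_le _ hpt)
    · exact (isMargin_sub_of_abs_sub_le c (abs_sum_sub_sum_le hpt)).div hn
    · refine isMargin_sub_of_abs_sub_le c ?_
      rw [← sub_div, abs_div, abs_of_pos hn, div_le_iff₀ hn, mul_comm]
      exact abs_sum_sub_sum_le hpt
  | cnt op D φ c ih =>
    obtain ⟨hwφ, hc⟩ := hφ
    have hmargin (l' : Loc) (_ : l' ∈ F.nbr D l) := ih hwφ ht l'
    cases op
    · simp only [sat, rho, gt_iff_lt, lt_sup'_iff, lt_ite_one_zero_iff hc.1 hc.2]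
      exact .exists _ hmargin
    · simp only [sat, rho, gt_iff_lt, lt_inf'_iff, lt_ite_one_zero_iff hc.1 hc.2]
      exact .forall _ hmargin
    · simp only [sat, rho, gt_iff_lt, sum_boole]
      exact .lt_card_filter hc.1 (hc.2 l) hmargin
    · have hn : (0 : ℝ) < #(F.nbr D l) := by exact_mod_cast (F.nbr_ne D l).card_pos
      simp only [sat, rho, gt_iff_lt, sum_boole, lt_div_iff₀ hn]
      exact .lt_card_filter (mul_nonneg hc.1 hn.le) (mul_lt_of_lt_one_left hn hc.2) hmargin

end SupDist

theorem sastl_quantitative_correctness_general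
    [Fintype Var] [Nonempty Var] [Fintype Loc] [Nonempty Loc]
    (F : Frame Dom Loc) (ω ω' : Var → ℝ → Loc → ℝ)
    (φ : SaSTL Var Dom) (hφ : WellFormed F φ)
    (t : ℝ) (ht : t ∈ F.T) (l : Loc)
    (hdist : supDist F ω ω' < rho F ω φ t l) :
    sat F ω' φ t l :=
  (isMargin_rho F ω ω' φ hφ ht l).1 hdist

/-- **Correctness of the SaSTL quantitative semantics**: for every SaSTL
formula `φ`, any two spatial-temporal signals `ω`, `ω'` over the same time and
spatial domains, every sample time `t ∈ 𝕋` and every location `l ∈ L`, if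
`(ω,t,l) ⊨ φ` and `‖ω − ω'‖_∞ < ρ(φ,ω,t,l)`, then `(ω',t,l) ⊨ φ`. -/
theorem sastl_quantitative_correctness
    [Fintype Var] [Nonempty Var] [Fintype Loc] [Nonempty Loc]
    (F : Frame Dom Loc) (ω ω' : Var → ℝ → Loc → ℝ)
    (φ : SaSTL Var Dom) (hφ : WellFormed F φ)
    (t : ℝ) (ht : t ∈ F.T) (l : Loc)
    (hsat : sat F ω φ t l)
    (hdist : supDist F ω ω' < rho F ω φ t l) :
    sat F ω' φ t l :=
  sastl_quantitative_correctness_general F ω ω' φ hφ t ht l hdist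

end
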